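/- Let f: D(X) → R assign to each vertex the value 0, to each triangle and each Gabriel edge the radius of its circumcircle, and to each non-Gabriel edge the minimum of the filtration values of its adjacent triangles. Then for every r ≥ 0, the sublevel complex f^{-1}([0, r]) equals the alpha complex A(X)_r. -/

import Mathlib

noncomputable section

abbrev Pt := EuclideanSpace ℝ (Fin 2)

instance : DecidableEq Pt := Classical.decEq _

/-- `X` is in general position: no three points collinear and no four points cocircular. -/
def GenPos (X : Finset Pt) : Prop :=
  (∀ s : Finset Pt, s ⊆ X → s.card = 3 → ¬ Collinear ℝ (s : Set Pt)) ∧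
  (∀ s : Finset Pt, s ⊆ X → s.card = 4 → ¬ ∃ (c : Pt) (r : ℝ), ∀ p ∈ s, dist p c = r)

/-- The Voronoi cell of `x` with respect to the point set `X`. -/
def Vor (X : Finset Pt) (x : Pt) : Set Pt := {p | ∀ y ∈ X, dist p x ≤ dist p y}

/-- `R_x(r) = B_x(r) ∩ V_x`. -/
def RCell (X : Finset Pt) (x : Pt) (r : ℝ) : Set Pt := Metric.closedBall x r ∩ Vor X x

/-- The alpha complex `A(X)_r`: the nerve of the cover `{R_x(r)}_{x ∈ X}`. -/
def AlphaCpx (X : Finset Pt) (r : ℝ) : Set (Finset Pt) :=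
  {σ | σ.Nonempty ∧ (σ : Set Pt) ⊆ (X : Set Pt) ∧ (⋂ x ∈ σ, RCell X x r).Nonempty}

/-- The Delaunay triangulation `D(X)` as the nerve of the Voronoi diagram. -/
def DelNerve (X : Finset Pt) : Set (Finset Pt) :=
  {σ | σ.Nonempty ∧ (σ : Set Pt) ⊆ (X : Set Pt) ∧ (⋂ x ∈ σ, Vor X x).Nonempty}

/-- The edge `{a,b}` is Gabriel: the open disc having the edge as diameter
contains no point of `X`. -/
def IsGabriel (X : Finset Pt) (a b : Pt) : Prop :=
  ∀ x ∈ X, dist a b / 2 ≤ dist x (midpoint ℝ a b)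

/-! A simplex `σ` of `D(X)` lies in `A(X)_r` exactly when some point of its Voronoi face
`⋂_{x ∈ σ} V_x` is within `r` of every vertex of `σ`, so it suffices to show that `f σ` is the
least such `r`. For a vertex this is `0`. A triangle has a single circumcentre, because two
distinct circles meet in at most two points, so its Voronoi face is that point. A Gabriel edge
has its midpoint in its Voronoi face, and no point is closer than half the edge length to both
ends. For a non-Gabriel edge `ab`, walk from a point `p` of its Voronoi face towards the
midpoint `m`: along the segment the differences `‖u - y‖² - ‖u - a‖²` are affine in `u`, and at
`m` one of them is negative, so at the first point `q` where one vanishes, `q` is the Voronoi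
vertex of a Delaunay triangle `abc`; `q` is no farther from `a` than `p`, since both `p` and
`m` lie in the closed ball of radius `dist p a` about `a`. Absence of four cocircular points
bounds the dimension of `D(X)` by two. -/

lemma exists_convexComb_nonneg_and_eq_zero {ι : Type*} (Y : Finset ι) (α β : ι → ℝ)
    (hα : ∀ y ∈ Y, 0 ≤ α y) (hβ : ∃ y ∈ Y, β y < 0) :
    ∃ s ∈ Set.Icc (0 : ℝ) 1, ∃ c ∈ Y, β c < 0 ∧ (1 - s) * α c + s * β c = 0 ∧
      ∀ y ∈ Y, 0 ≤ (1 - s) * α y + s * β y := by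
  classical
  obtain ⟨x, hxY, hx⟩ := hβ
  obtain ⟨c, hcY, hcmin⟩ := (Y.filter (β · < 0)).exists_min_image
    (fun y => α y / (α y - β y)) ⟨x, Finset.mem_filter.mpr ⟨hxY, hx⟩⟩
  obtain ⟨hcY, hc⟩ := Finset.mem_filter.mp hcY
  have hden : ∀ y ∈ Y, β y < 0 → 0 < α y - β y := fun y hy hβy => by linarith [hα y hy]
  -- the first zero in `[0, 1]` of any of the functions `t ↦ (1 - t) * α y + t * β y`
  set s := α c / (α c - β c)
  have hs0 : 0 ≤ s := div_nonneg (hα c hcY) (hden c hcY hc).le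
  have hs1 : s ≤ 1 := by
    rw [div_le_one (hden c hcY hc)]
    linarith
  refine ⟨s, ⟨hs0, hs1⟩, c, hcY, hc, ?_, fun y hy => ?_⟩
  · linear_combination -div_mul_cancel₀ (α c) (hden c hcY hc).ne'
  · by_cases hβy : β y < 0
    · have hle := hcmin y (Finset.mem_filter.mpr ⟨hy, hβy⟩)
      rw [le_div_iff₀ (hden y hy hβy)] at hle
      linarith
    · nlinarith [hα y hy]

section Euclidean

variable {E : Type*} [NormedAddCommGroup E] [InnerProductSpace ℝ E]

-- `‖u - y‖² - ‖u - a‖² = ‖y‖² - ‖a‖² - 2 ⟪u, y - a⟫` is affine in `u`.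
lemma dist_sq_sub_dist_sq_convexComb (p m a y : E) (s : ℝ) :
    dist ((1 - s) • p + s • m) y ^ 2 - dist ((1 - s) • p + s • m) a ^ 2 =
      (1 - s) * (dist p y ^ 2 - dist p a ^ 2) + s * (dist m y ^ 2 - dist m a ^ 2) := by
  simp only [dist_eq_norm, norm_sub_sq_real, inner_add_left, real_inner_smul_left]
  ring

variable {V P : Type*} [NormedAddCommGroup V] [InnerProductSpace ℝ V] [MetricSpace P]
  [NormedAddTorsor V P]

lemma eq_of_forall_dist_eq_of_card_eq_three [FiniteDimensional ℝ V]
    (hd : Module.finrank ℝ V = 2) {σ : Finset P} (hσ : σ.card = 3) {z z' : P} {ρ ρ' : ℝ}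
    (hz : ∀ v ∈ σ, dist v z = ρ) (hz' : ∀ v ∈ σ, dist v z' = ρ') : z = z' := by
  classical
  obtain ⟨a, b, c, hab, hac, hbc, rfl⟩ := Finset.card_eq_three.mp hσ
  by_contra hne
  rcases EuclideanGeometry.eq_of_dist_eq_of_dist_eq_of_finrank_eq_two hd hne hab
    (hz a (by simp)) (hz b (by simp)) (hz c (by simp))
    (hz' a (by simp)) (hz' b (by simp)) (hz' c (by simp)) with rfl | rfl
  · exact hac rfl
  · exact hbc rfl

end Euclidean

section Voronoi

variable {X : Finset Pt}

lemma mem_vor_iff_sq {p a : Pt} : p ∈ Vor X a ↔ ∀ y ∈ X, 0 ≤ dist p y ^ 2 - dist p a ^ 2 := by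
  simp only [Vor, Set.mem_ofPred_eq, sub_nonneg, sq_le_sq₀ dist_nonneg dist_nonneg]

lemma dist_eq_of_mem_vor {p a b : Pt} (ha : a ∈ X) (hb : b ∈ X) (hpa : p ∈ Vor X a)
    (hpb : p ∈ Vor X b) : dist p a = dist p b :=
  le_antisymm (hpa b hb) (hpb a ha)

lemma mem_vor_of_dist_eq {p a c : Pt} (hpa : p ∈ Vor X a) (h : dist p c = dist p a) :
    p ∈ Vor X c :=
  fun y hy => h ▸ hpa y hy

lemma mem_delNerve_iff {σ : Finset Pt} :
    σ ∈ DelNerve X ↔ σ.Nonempty ∧ (σ : Set Pt) ⊆ X ∧ ∃ p, ∀ x ∈ σ, p ∈ Vor X x := by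
  simp only [DelNerve, Set.mem_ofPred_eq, Set.nonempty_def, Set.mem_iInter₂]

lemma mem_alphaCpx_iff {σ : Finset Pt} {r : ℝ} :
    σ ∈ AlphaCpx X r ↔
      σ.Nonempty ∧ (σ : Set Pt) ⊆ X ∧ ∃ p, ∀ x ∈ σ, dist p x ≤ r ∧ p ∈ Vor X x := by
  simp only [AlphaCpx, RCell, Set.mem_ofPred_eq, Set.nonempty_def, Set.mem_iInter₂,
    Set.mem_inter_iff, Metric.mem_closedBall]

lemma mem_of_mem_delNerve {σ : Finset Pt} (hσ : σ ∈ DelNerve X) {x : Pt} (hx : x ∈ σ) :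
    x ∈ X :=
  (mem_delNerve_iff.mp hσ).2.1 hx

lemma mem_delNerve_of_mem_alphaCpx {σ : Finset Pt} {r : ℝ} (h : σ ∈ AlphaCpx X r) :
    σ ∈ DelNerve X := by
  obtain ⟨hne, hσX, p, hp⟩ := mem_alphaCpx_iff.mp h
  exact mem_delNerve_iff.mpr ⟨hne, hσX, p, fun x hx => (hp x hx).2⟩

lemma alphaCpx_mono {r r' : ℝ} (h : r ≤ r') : AlphaCpx X r ⊆ AlphaCpx X r' := by
  intro σ hσ
  obtain ⟨hne, hσX, p, hp⟩ := mem_alphaCpx_iff.mp hσ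
  exact mem_alphaCpx_iff.mpr ⟨hne, hσX, p, fun x hx => ⟨(hp x hx).1.trans h, (hp x hx).2⟩⟩

lemma mem_alphaCpx_of_subset {σ τ : Finset Pt} {r : ℝ} (hτ : τ.Nonempty) (hτσ : τ ⊆ σ)
    (hσ : σ ∈ AlphaCpx X r) : τ ∈ AlphaCpx X r := by
  obtain ⟨-, hσX, p, hp⟩ := mem_alphaCpx_iff.mp hσ
  exact mem_alphaCpx_iff.mpr ⟨hτ, (Finset.coe_subset.mpr hτσ).trans hσX, p,
    fun x hx => hp x (hτσ hx)⟩

lemma mem_alphaCpx_iff_le {σ : Finset Pt} {ρ r : ℝ} (h : IsLeast {r | σ ∈ AlphaCpx X r} ρ) :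
    σ ∈ AlphaCpx X r ↔ ρ ≤ r :=
  ⟨fun hσ => h.2 hσ, fun hρ => alphaCpx_mono hρ h.1⟩

lemma card_le_three_of_mem_delNerve (hX : GenPos X) {σ : Finset Pt} (hσ : σ ∈ DelNerve X) :
    σ.card ≤ 3 := by
  obtain ⟨-, hσX, p, hp⟩ := mem_delNerve_iff.mp hσ
  by_contra! h
  obtain ⟨s, hsσ, hs⟩ := Finset.exists_subset_card_eq (show 4 ≤ σ.card by omega)
  obtain ⟨v, hv⟩ := Finset.card_pos.mp (show 0 < s.card by omega)
  refine hX.2 s (hsσ.trans (Finset.coe_subset.mp hσX)) hs ⟨p, dist v p, fun w hw => ?_⟩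
  rw [dist_comm w, dist_comm v]
  exact dist_eq_of_mem_vor (hσX (hsσ hw)) (hσX (hsσ hv)) (hp w (hsσ hw)) (hp v (hsσ hv))

lemma eq_of_forall_mem_vor_of_card_eq_three {σ : Finset Pt} (hσX : (σ : Set Pt) ⊆ X)
    (hσ : σ.card = 3) {p c : Pt} {ρ : ℝ} (hp : ∀ x ∈ σ, p ∈ Vor X x)
    (hc : ∀ v ∈ σ, dist v c = ρ) : p = c := by
  obtain ⟨v, hv⟩ := Finset.card_pos.mp (show 0 < σ.card by omega)
  refine eq_of_forall_dist_eq_of_card_eq_three finrank_euclideanSpace_fin hσ (ρ := dist v p)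
    (fun w hw => ?_) hc
  rw [dist_comm w, dist_comm v]
  exact dist_eq_of_mem_vor (hσX hw) (hσX hv) (hp w hw) (hp v hv)

lemma isLeast_alpha_singleton {x : Pt} (hx : x ∈ X) : IsLeast {r | {x} ∈ AlphaCpx X r} 0 := by
  refine ⟨mem_alphaCpx_iff.mpr ⟨Finset.singleton_nonempty x, by simpa using hx, x, ?_⟩,
    fun r hr => ?_⟩
  · simp [Vor]
  · obtain ⟨-, -, p, hp⟩ := mem_alphaCpx_iff.mp hr
    exact dist_nonneg.trans (hp x (Finset.mem_singleton_self x)).1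

lemma isLeast_alpha_of_isGabriel {a b : Pt} (ha : a ∈ X) (hb : b ∈ X) (hg : IsGabriel X a b) :
    IsLeast {r | {a, b} ∈ AlphaCpx X r} (dist a b / 2) := by
  have hm : ∀ x ∈ ({a, b} : Finset Pt), dist (midpoint ℝ a b) x = dist a b / 2 := by
    simp [dist_midpoint_left, dist_midpoint_right, div_eq_inv_mul]
  refine ⟨mem_alphaCpx_iff.mpr ⟨Finset.insert_nonempty _ _, by simp [Set.insert_subset_iff, ha, hb],
    midpoint ℝ a b, fun x hx => ⟨(hm x hx).le, fun y hy => ?_⟩⟩, fun r hr => ?_⟩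
  · rw [hm x hx, dist_comm (midpoint ℝ a b)]
    exact hg y hy
  · obtain ⟨-, -, p, hp⟩ := mem_alphaCpx_iff.mp hr
    linarith [dist_triangle_left a b p, (hp a (by simp)).1, (hp b (by simp)).1]

lemma isLeast_alpha_of_card_eq_three {σ : Finset Pt} (hσ : σ ∈ DelNerve X) (h3 : σ.card = 3)
    {c : Pt} {ρ : ℝ} (hc : ∀ v ∈ σ, dist v c = ρ) : IsLeast {r | σ ∈ AlphaCpx X r} ρ := by
  obtain ⟨hne, hσX, p, hp⟩ := mem_delNerve_iff.mp hσ
  have hcircum : ∀ q, (∀ x ∈ σ, q ∈ Vor X x) → ∀ x ∈ σ, dist q x = ρ := fun q hq x hx => by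
    rw [eq_of_forall_mem_vor_of_card_eq_three hσX h3 hq hc, dist_comm]
    exact hc x hx
  refine ⟨mem_alphaCpx_iff.mpr ⟨hne, hσX, p, fun x hx => ⟨(hcircum p hp x hx).le, hp x hx⟩⟩,
    fun r hr => ?_⟩
  obtain ⟨-, -, q, hq⟩ := mem_alphaCpx_iff.mp hr
  obtain ⟨v, hv⟩ := hne
  exact hcircum q (fun x hx => (hq x hx).2) v hv ▸ (hq v hv).1

lemma ne_of_not_isGabriel {a b : Pt} (h : ¬ IsGabriel X a b) : a ≠ b := by
  rintro rfl
  exact h fun x _ => by simp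

lemma exists_voronoi_vertex_of_not_isGabriel {a b p : Pt} (ha : a ∈ X) (hb : b ∈ X)
    (hng : ¬ IsGabriel X a b) (hpa : p ∈ Vor X a) (hpb : p ∈ Vor X b) :
    ∃ c ∈ X, c ≠ a ∧ c ≠ b ∧ ∃ q ∈ Vor X a,
      dist q b = dist q a ∧ dist q c = dist q a ∧ dist q a ≤ dist p a := by
  set m := midpoint ℝ a b
  have hma : dist m a = dist a b / 2 := by simp [m, dist_midpoint_left, div_eq_inv_mul]
  have hmb : dist m b = dist a b / 2 := by simp [m, dist_midpoint_right, div_eq_inv_mul]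
  have hpab : dist p a = dist p b := dist_eq_of_mem_vor ha hb hpa hpb
  have hinside : ∃ y ∈ X, dist m y ^ 2 - dist m a ^ 2 < 0 := by
    simp only [IsGabriel, not_forall, not_le] at hng
    obtain ⟨x, hx, hxm⟩ := hng
    refine ⟨x, hx, ?_⟩
    rw [sub_neg, sq_lt_sq₀ dist_nonneg dist_nonneg, dist_comm, hma]
    exact hxm
  obtain ⟨s, ⟨hs0, hs1⟩, c, hcX, hc_in, hc0, hpos⟩ := exists_convexComb_nonneg_and_eq_zero X
    (fun y => dist p y ^ 2 - dist p a ^ 2) (fun y => dist m y ^ 2 - dist m a ^ 2)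
    (mem_vor_iff_sq.mp hpa) hinside
  set q := (1 - s) • p + s • m
  have hq := fun y => dist_sq_sub_dist_sq_convexComb p m a y s
  have hqb : dist q b = dist q a := by
    rw [← sq_eq_sq₀ dist_nonneg dist_nonneg, ← sub_eq_zero, hq b, hpab, hma, hmb]
    ring
  have hqc : dist q c = dist q a := by
    rw [← sq_eq_sq₀ dist_nonneg dist_nonneg, ← sub_eq_zero, hq c]
    exact hc0
  have hca : c ≠ a := by
    rintro rfl
    simp at hc_in
  have hcb : c ≠ b := by
    rintro rfl
    simp only [hma, hmb, sub_self, lt_irrefl] at hc_in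
  have hqp : dist q a ≤ dist p a := by
    have hm_ball : m ∈ Metric.closedBall a (dist p a) := by
      rw [Metric.mem_closedBall, hma]
      linarith [dist_triangle_left a b p]
    exact (convex_closedBall a (dist p a)).segment_subset (Metric.mem_closedBall.mpr le_rfl)
      hm_ball ⟨1 - s, s, by linarith, hs0, by ring, rfl⟩
  exact ⟨c, hcX, hca, hcb, q, mem_vor_iff_sq.mpr fun y hy => hq y ▸ hpos y hy, hqb, hqc, hqp⟩

lemma exists_triangle_mem_alphaCpx_of_not_isGabriel {a b : Pt} {r : ℝ}
    (hng : ¬ IsGabriel X a b) (h : {a, b} ∈ AlphaCpx X r) :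
    ∃ t ∈ AlphaCpx X r, t.card = 3 ∧ {a, b} ⊆ t := by
  obtain ⟨-, hsub, p, hp⟩ := mem_alphaCpx_iff.mp h
  have ha : a ∈ X := hsub (by simp)
  have hb : b ∈ X := hsub (by simp)
  obtain ⟨hpa, hpa'⟩ := hp a (by simp)
  obtain ⟨c, hcX, hca, hcb, q, hqa, hqb, hqc, hqp⟩ :=
    exists_voronoi_vertex_of_not_isGabriel ha hb hng hpa' (hp b (by simp)).2
  refine ⟨{a, b, c}, mem_alphaCpx_iff.mpr ⟨by simp, by simp [ha, hb, hcX, Set.insert_subset_iff],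
    q, ?_⟩, Finset.card_eq_three.mpr ⟨a, b, c, ne_of_not_isGabriel hng, hca.symm, hcb.symm, rfl⟩,
    Finset.insert_subset_insert a (by simp)⟩
  have hqr : dist q a ≤ r := hqp.trans hpa
  simp only [Finset.mem_insert, Finset.mem_singleton, forall_eq_or_imp, forall_eq]
  exact ⟨⟨hqr, hqa⟩, ⟨hqb ▸ hqr, mem_vor_of_dist_eq hqa hqb⟩, ⟨hqc ▸ hqr, mem_vor_of_dist_eq hqa hqc⟩⟩

lemma isLeast_alpha_of_not_isGabriel {a b : Pt} (hng : ¬ IsGabriel X a b) {g : Finset Pt → ℝ}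
    (hg : ∀ t ∈ DelNerve X, t.card = 3 → IsLeast {r | t ∈ AlphaCpx X r} (g t)) {ρ : ℝ}
    (hattain : ∃ t ∈ DelNerve X, t.card = 3 ∧ {a, b} ⊆ t ∧ ρ = g t)
    (hmin : ∀ t ∈ DelNerve X, t.card = 3 → {a, b} ⊆ t → ρ ≤ g t) :
    IsLeast {r | {a, b} ∈ AlphaCpx X r} ρ := by
  obtain ⟨t, ht, h3, hsub, rfl⟩ := hattain
  refine ⟨mem_alphaCpx_of_subset (Finset.insert_nonempty _ _) hsub (hg t ht h3).1, fun r hr => ?_⟩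
  obtain ⟨t', ht', h3', hsub'⟩ := exists_triangle_mem_alphaCpx_of_not_isGabriel hng hr
  have ht'D := mem_delNerve_of_mem_alphaCpx ht'
  exact (hmin t' ht'D h3' hsub').trans ((hg t' ht'D h3').2 ht')

end Voronoi

theorem sublevel_of_alpha_filtration_eq_alphaCpx
    (X : Finset Pt) (hX : GenPos X) (f : Finset Pt → ℝ)
    (hvertex : ∀ x ∈ X, f {x} = 0)
    (htriangle : ∀ σ ∈ DelNerve X, σ.card = 3 → ∃ c : Pt, ∀ v ∈ σ, dist v c = f σ)
    (hgabriel : ∀ a b : Pt, a ≠ b → ({a, b} : Finset Pt) ∈ DelNerve X →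
      IsGabriel X a b → f {a, b} = dist a b / 2)
    (hnongabriel : ∀ a b : Pt, a ≠ b → ({a, b} : Finset Pt) ∈ DelNerve X →
      ¬ IsGabriel X a b →
      (∃ t ∈ DelNerve X, t.card = 3 ∧ ({a, b} : Finset Pt) ⊆ t ∧ f {a, b} = f t) ∧
      (∀ t ∈ DelNerve X, t.card = 3 → ({a, b} : Finset Pt) ⊆ t → f {a, b} ≤ f t)) :
    ∀ r : ℝ, 0 ≤ r → {σ ∈ DelNerve X | f σ ≤ r} = AlphaCpx X r := by
  have htri : ∀ t ∈ DelNerve X, t.card = 3 → IsLeast {r | t ∈ AlphaCpx X r} (f t) :=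
    fun t ht h3 => (htriangle t ht h3).elim fun _ hc => isLeast_alpha_of_card_eq_three ht h3 hc
  have hleast : ∀ σ ∈ DelNerve X, IsLeast {r | σ ∈ AlphaCpx X r} (f σ) := by
    intro σ hσ
    have hpos := Finset.card_pos.mpr (mem_delNerve_iff.mp hσ).1
    have hle := card_le_three_of_mem_delNerve hX hσ
    obtain h1 | h2 | h3 : σ.card = 1 ∨ σ.card = 2 ∨ σ.card = 3 := by omega
    · obtain ⟨x, rfl⟩ := Finset.card_eq_one.mp h1
      have hx := mem_of_mem_delNerve hσ (Finset.mem_singleton_self x)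
      exact hvertex x hx ▸ isLeast_alpha_singleton hx
    · obtain ⟨a, b, hab, rfl⟩ := Finset.card_eq_two.mp h2
      by_cases hg : IsGabriel X a b
      · exact hgabriel a b hab hσ hg ▸ isLeast_alpha_of_isGabriel
          (mem_of_mem_delNerve hσ (by simp)) (mem_of_mem_delNerve hσ (by simp)) hg
      · obtain ⟨hattain, hmin⟩ := hnongabriel a b hab hσ hg
        exact isLeast_alpha_of_not_isGabriel hg htri hattain hmin
    · exact htri σ hσ h3
  intro r _
  ext σ
  refine ⟨fun ⟨hσ, hr⟩ => (mem_alphaCpx_iff_le (hleast σ hσ)).mpr hr, fun hσ => ?_⟩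
  have hσD := mem_delNerve_of_mem_alphaCpx hσ
  exact ⟨hσD, (mem_alphaCpx_iff_le (hleast σ hσD)).mp hσ⟩
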